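/- arXiv:2510.26062 — 3 statements merged into one kernel-verified Lean document; each statement's English description precedes it below -/
import Mathlib

section
/- Intermediate integral inequality in the mean curvature comparison for the ∞-Bakry-Émery Ricci tensor (Lemma 2.2): let n > 1 be a real number, T ∈ (0,∞], H ∈ ℝ, and let m : [0,T) → ℝ be differentiable and φ : [0,T) → ℝ be twice differentiable, with m(0) = H and m'(r) ≤ − m(r)^2/(n−1) + φ''(r) for all r ∈ [0,T). Set H_f = H − φ'(0), h(r) = (n−1) + H_f r, and m₀(r) = (n−1)H_f / h(r). Then for every r ∈ [0,T) such that h > 0 on [0,r], one has h(r)^2 · ( m(r) − φ'(r) − m₀(r) ) ≤ − ∫₀^r (h^2)'(t) · φ'(t) dt. -/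
/-!
With `h t = (n - 1) + H_f t`, the Riccati inequality for `m` and the identity
`h² (m - φ') - (n - 1) H_f h = h² (m - φ' - m₀)` give, after completing the square,
`(h² (m - φ') - (n - 1) H_f h)' ≤ -(h²)' φ'`. Integrating over `[0, r]` proves the claim, the
boundary term at `0` vanishing because `H_f = m 0 - φ' 0`.
-/

open Set ENNReal intervalIntegral MeasureTheory

theorem sq_mul_add_two_mul_mul_sub_nonpos_of_le {K : Type*} [Field K] [LinearOrder K]
    [IsStrictOrderedRing K] {a k h μ d : K} (ha : 0 < a)
    (hd : d ≤ -μ ^ 2 / a) : h ^ 2 * d + 2 * h * k * μ - a * k ^ 2 ≤ 0 :=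
  calc h ^ 2 * d + 2 * h * k * μ - a * k ^ 2
      ≤ h ^ 2 * (-μ ^ 2 / a) + 2 * h * k * μ - a * k ^ 2 := by gcongr
    _ = -(h * μ - a * k) ^ 2 / a := by field_simp; ring
    _ ≤ 0 := div_nonpos_of_nonpos_of_nonneg (neg_nonpos.2 (sq_nonneg _)) ha.le

theorem sq_mul_div_self {K : Type*} [Field K] (x c : K) : x ^ 2 * (c / x) = c * x := by
  rcases eq_or_ne x 0 with rfl | hx
  · simp
  · field_simp

theorem continuousOn_Icc_and_hasDerivAt_Ioo_of_hasDerivWithinAt_Ici {E : Type*}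
    [NormedAddCommGroup E] [NormedSpace ℝ E] {f f' : ℝ → E} {a b : ℝ}
    (hf : ∀ t ∈ Icc a b, HasDerivWithinAt f (f' t) (Ici a) t) :
    ContinuousOn f (Icc a b) ∧ ∀ t ∈ Ioo a b, HasDerivAt f (f' t) t :=
  ⟨fun t ht => (hf t ht).continuousWithinAt.mono Icc_subset_Ici_self,
    fun t ht => (hf t (Ioo_subset_Icc_self ht)).hasDerivAt (Ici_mem_nhds ht.1)⟩

theorem riccati_comparison_integral {a k r : ℝ} (ha : 0 < a) (hr : 0 ≤ r)
    {m m' ψ ψ' : ℝ → ℝ} (hmc : ContinuousOn m (Icc 0 r)) (hψc : ContinuousOn ψ (Icc 0 r))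
    (hm : ∀ t ∈ Ioo 0 r, HasDerivAt m (m' t) t) (hψ : ∀ t ∈ Ioo 0 r, HasDerivAt ψ (ψ' t) t)
    (hriccati : ∀ t ∈ Ioo 0 r, m' t ≤ -m t ^ 2 / a + ψ' t) :
    (a + k * r) ^ 2 * (m r - ψ r) - a * k * (a + k * r) - a ^ 2 * (m 0 - ψ 0 - k) ≤
      -∫ t in (0 : ℝ)..r, 2 * (a + k * t) * k * ψ t := by
  set h : ℝ → ℝ := fun t => a + k * t
  set G : ℝ → ℝ := fun t => h t ^ 2 * (m t - ψ t) - a * k * h t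
  have hh : ∀ t, HasDerivAt h k t := fun t =>
    (((hasDerivAt_id t).const_mul k).const_add a).congr_deriv (mul_one k)
  have hG : ∀ t ∈ Ioo 0 r, HasDerivAt G
      (2 * h t * k * (m t - ψ t) + h t ^ 2 * (m' t - ψ' t) - a * k * k) t := fun t ht =>
    ((((hh t).pow 2).mul ((hm t ht).sub (hψ t ht))).sub ((hh t).const_mul (a * k))).congr_deriv
      (by simp only [Pi.sub_apply, Pi.pow_apply, Nat.cast_ofNat]; ring)
  have hGc : ContinuousOn G (Icc 0 r) := by
    have : Continuous h := by fun_prop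
    exact ((this.pow 2).continuousOn.mul (hmc.sub hψc)).sub (this.continuousOn.const_mul _)
  have hG_le : ∀ t ∈ Ioo 0 r,
      2 * h t * k * (m t - ψ t) + h t ^ 2 * (m' t - ψ' t) - a * k * k ≤ -(2 * h t * k * ψ t) :=
    fun t ht => by
      have hsq := sq_mul_add_two_mul_mul_sub_nonpos_of_le (h := h t) (k := k) ha
        (show m' t - ψ' t ≤ -m t ^ 2 / a by linarith [hriccati t ht])
      linarith
  have hint : IntegrableOn (fun t => -(2 * h t * k * ψ t)) (Icc 0 r) :=
    ContinuousOn.integrableOn_Icc (by fun_prop)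
  calc _ = G r - G 0 := by simp only [G, h]; ring
    _ ≤ ∫ t in (0 : ℝ)..r, -(2 * h t * k * ψ t) :=
      sub_le_integral_of_hasDeriv_right_of_le hr hGc (fun t ht => (hG t ht).hasDerivWithinAt)
        hint hG_le
    _ = _ := integral_neg

theorem weighted_mean_curvature_integral_inequality_general
    (n H : ℝ) (hn : 1 < n) (T : ℝ≥0∞)
    (m m' φ' φ'' : ℝ → ℝ)
    (hm : ∀ r : ℝ, 0 ≤ r → ENNReal.ofReal r < T →
      HasDerivWithinAt m (m' r) (Set.Ici 0) r)
    (hφ' : ∀ r : ℝ, 0 ≤ r → ENNReal.ofReal r < T →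
      HasDerivWithinAt φ' (φ'' r) (Set.Ici 0) r)
    (h0 : m 0 = H)
    (hriccati : ∀ r : ℝ, 0 ≤ r → ENNReal.ofReal r < T →
      m' r ≤ - (m r) ^ 2 / (n - 1) + φ'' r)
    (r : ℝ) (hr0 : 0 ≤ r) (hrT : ENNReal.ofReal r < T) :
    ((n - 1) + (H - φ' 0) * r) ^ 2 *
        (m r - φ' r - (n - 1) * (H - φ' 0) / ((n - 1) + (H - φ' 0) * r)) ≤
      - ∫ t in (0 : ℝ)..r, (2 * ((n - 1) + (H - φ' 0) * t) * (H - φ' 0)) * φ' t := by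
  have hT : ∀ t ∈ Icc 0 r, ENNReal.ofReal t < T := fun t ht =>
    (ENNReal.ofReal_le_ofReal ht.2).trans_lt hrT
  obtain ⟨hmc, hm⟩ := continuousOn_Icc_and_hasDerivAt_Ioo_of_hasDerivWithinAt_Ici
    fun t ht => hm t ht.1 (hT t ht)
  obtain ⟨hφc, hφ'⟩ := continuousOn_Icc_and_hasDerivAt_Ioo_of_hasDerivWithinAt_Ici
    fun t ht => hφ' t ht.1 (hT t ht)
  have key := riccati_comparison_integral (k := H - φ' 0) (sub_pos.2 hn) hr0 hmc hφc
    hm hφ' fun t ht => hriccati t ht.1.le (hT t (Ioo_subset_Icc_self ht))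
  rw [h0, sub_self, mul_zero, sub_zero] at key
  rw [mul_sub _ (m r - φ' r), sq_mul_div_self]
  convert key using 3

/-- Intermediate integral inequality in the mean curvature comparison for the
`∞`-Bakry-Émery Ricci tensor: with `H_f = H - φ' 0`, `h r = (n-1) + H_f * r` and
`m₀ r = (n-1) * H_f / h r`, if `m 0 = H` and `m' r ≤ - (m r)^2/(n-1) + φ'' r` on `[0,T)`,
then `h(r)^2 * (m r - φ' r - m₀ r) ≤ - ∫ t in 0..r, (h^2)'(t) * φ'(t) dt`
whenever `h > 0` on `[0,r]`. -/
theorem weighted_mean_curvature_integral_inequality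
    (n H : ℝ) (hn : 1 < n) (T : ℝ≥0∞) (hT : 0 < T)
    (m m' φ φ' φ'' : ℝ → ℝ)
    (hm : ∀ r : ℝ, 0 ≤ r → ENNReal.ofReal r < T →
      HasDerivWithinAt m (m' r) (Set.Ici 0) r)
    (hφ : ∀ r : ℝ, 0 ≤ r → ENNReal.ofReal r < T →
      HasDerivWithinAt φ (φ' r) (Set.Ici 0) r)
    (hφ' : ∀ r : ℝ, 0 ≤ r → ENNReal.ofReal r < T →
      HasDerivWithinAt φ' (φ'' r) (Set.Ici 0) r)
    (h0 : m 0 = H)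
    (hriccati : ∀ r : ℝ, 0 ≤ r → ENNReal.ofReal r < T →
      m' r ≤ - (m r) ^ 2 / (n - 1) + φ'' r)
    (r : ℝ) (hr0 : 0 ≤ r) (hrT : ENNReal.ofReal r < T)
    (hpos : ∀ t ∈ Set.Icc (0 : ℝ) r, 0 < (n - 1) + (H - φ' 0) * t) :
    ((n - 1) + (H - φ' 0) * r) ^ 2 *
        (m r - φ' r - (n - 1) * (H - φ' 0) / ((n - 1) + (H - φ' 0) * r)) ≤
      - ∫ t in (0 : ℝ)..r, (2 * ((n - 1) + (H - φ' 0) * t) * (H - φ' 0)) * φ' t :=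
  weighted_mean_curvature_integral_inequality_general n H hn T m m' φ' φ'' hm hφ' h0 hriccati r hr0
    hrT
end

section
/- Weighted Riccati comparison (analytic core of Lemma 2.2, mean curvature comparison for nonnegative ∞-Bakry-Émery Ricci curvature): let n > 1 be a real number, T ∈ (0,∞], H ∈ ℝ, and let m : [0,T) → ℝ be differentiable and φ : [0,T) → ℝ be twice differentiable, with m(0) = H and m'(r) ≤ − m(r)^2/(n−1) + φ''(r) for all r ∈ [0,T). Set H_f = H − φ'(0). If H_f ≥ 0 and φ'(r) ≥ 0 for all r ∈ [0,T), then for every r ∈ [0,T) one has m(r) − φ'(r) ≤ (n−1) H_f / ((n−1) + H_f r). -/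
open Set ENNReal

/-!
Put `u = m - φ'`. Wherever `u ≥ 0`, the bound `φ' ≥ 0` gives `m² ≥ u²`, so the weighted inequality
collapses to the unweighted Riccati inequality `u' ≤ -u²/(n-1)`. The model `m₀` solves the
corresponding Riccati equation with `m₀(0) = H_f ≥ u(0)`, and is nonnegative; comparing `u` with
`m₀ + ε` by the first-crossing argument for one-sided derivatives gives `u ≤ m₀ + ε` for every `ε > 0`.
-/

/-- The paper's `m₀`, with `c = n - 1` and `a = H_f`. -/
noncomputable def riccatiModel (c a : ℝ) (x : ℝ) : ℝ := c * a / (c + a * x)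

theorem riccatiModel_zero {c : ℝ} (hc : c ≠ 0) (a : ℝ) : riccatiModel c a 0 = a := by
  simp [riccatiModel, hc]

theorem riccatiModel_nonneg {c a x : ℝ} (hc : 0 ≤ c) (ha : 0 ≤ a) (hx : 0 ≤ x) :
    0 ≤ riccatiModel c a x := by
  unfold riccatiModel; positivity

theorem hasDerivAt_riccatiModel {c a x : ℝ} (hx : c + a * x ≠ 0) :
    HasDerivAt (riccatiModel c a) (-riccatiModel c a x ^ 2 / c) x := by
  have hden : HasDerivAt (fun y => c + a * y) a x := by
    simpa using ((hasDerivAt_id x).const_mul a).const_add c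
  have hquot : HasDerivAt (riccatiModel c a) ((0 * (c + a * x) - c * a * a) / (c + a * x) ^ 2) x :=
    (hasDerivAt_const x (c * a)).div hden hx
  convert hquot using 1
  rcases eq_or_ne c 0 with rfl | hc
  · simp [riccatiModel]
  · simp only [riccatiModel]
    field_simp
    ring

theorem le_riccatiModel {c a r : ℝ} {u u' : ℝ → ℝ} (hc : 0 < c) (ha : 0 ≤ a) (hr : 0 ≤ r)
    (hu : ContinuousOn u (Icc 0 r))
    (hu' : ∀ x ∈ Ico 0 r, HasDerivWithinAt u (u' x) (Ici x) x)
    (h0 : u 0 ≤ a) (hriccati : ∀ x ∈ Ico 0 r, 0 ≤ u x → u' x ≤ -u x ^ 2 / c) :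
    u r ≤ riccatiModel c a r := by
  have hderiv : ∀ x, 0 ≤ x → HasDerivAt (riccatiModel c a) (-riccatiModel c a x ^ 2 / c) x :=
    fun x hx => hasDerivAt_riccatiModel (by positivity)
  refine le_of_forall_pos_le_add fun ε hε => ?_
  refine image_le_of_deriv_right_lt_deriv_boundary' (B := fun x => riccatiModel c a x + ε)
    hu hu' (by simpa [riccatiModel_zero hc.ne'] using h0.trans (le_add_of_nonneg_right hε.le))
    (fun x hx => ((hderiv x hx.1).add_const ε).continuousAt.continuousWithinAt)
    (fun x hx => ((hderiv x hx.1).add_const ε).hasDerivWithinAt) ?_ (right_mem_Icc.2 hr)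
  intro x hx hux
  have hM := riccatiModel_nonneg hc.le ha hx.1
  calc u' x ≤ -u x ^ 2 / c := hriccati x hx (by linarith)
    _ < -riccatiModel c a x ^ 2 / c := by
      gcongr
      nlinarith

theorem sub_le_neg_sq_div_of_le_neg_sq_div_add {c m m' p p'' : ℝ} (hc : 0 < c) (hp : 0 ≤ p)
    (hmp : 0 ≤ m - p) (h : m' ≤ -m ^ 2 / c + p'') : m' - p'' ≤ -(m - p) ^ 2 / c := by
  have : (m - p) ^ 2 ≤ m ^ 2 := by nlinarith
  have : (m - p) ^ 2 / c ≤ m ^ 2 / c := by gcongr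
  rw [neg_div] at h ⊢
  linarith

theorem weighted_riccati_comparison_general
    (n H : ℝ) (hn : 1 < n) (T : ℝ≥0∞)
    (m m' φ' φ'' : ℝ → ℝ)
    (hm : ∀ r : ℝ, 0 ≤ r → ENNReal.ofReal r < T →
      HasDerivWithinAt m (m' r) (Set.Ici 0) r)
    (hφ' : ∀ r : ℝ, 0 ≤ r → ENNReal.ofReal r < T →
      HasDerivWithinAt φ' (φ'' r) (Set.Ici 0) r)
    (h0 : m 0 = H)
    (hriccati : ∀ r : ℝ, 0 ≤ r → ENNReal.ofReal r < T →
      m' r ≤ - (m r) ^ 2 / (n - 1) + φ'' r)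
    (hHf : 0 ≤ H - φ' 0)
    (hφ'nonneg : ∀ r : ℝ, 0 ≤ r → ENNReal.ofReal r < T → 0 ≤ φ' r)
    (r : ℝ) (hr0 : 0 ≤ r) (hrT : ENNReal.ofReal r < T) :
    m r - φ' r ≤ (n - 1) * (H - φ' 0) / ((n - 1) + (H - φ' 0) * r) := by
  have hT : ∀ x ∈ Icc 0 r, ENNReal.ofReal x < T := fun x hx =>
    (ENNReal.ofReal_le_ofReal hx.2).trans_lt hrT
  have hderiv : ∀ x ∈ Icc 0 r, HasDerivWithinAt (fun y => m y - φ' y) (m' x - φ'' x) (Ici 0) x :=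
    fun x hx => (hm x hx.1 (hT x hx)).sub (hφ' x hx.1 (hT x hx))
  refine le_riccatiModel (u := fun y => m y - φ' y) (sub_pos.2 hn) hHf hr0
    (fun x hx => (hderiv x hx).continuousWithinAt.mono fun y hy => hy.1)
    (fun x hx => (hderiv x (Ico_subset_Icc_self hx)).mono fun y hy => hx.1.trans hy)
    (by rw [h0]) fun x hx hux => ?_
  have hxT := hT x (Ico_subset_Icc_self hx)
  exact sub_le_neg_sq_div_of_le_neg_sq_div_add (sub_pos.2 hn) (hφ'nonneg x hx.1 hxT) hux
    (hriccati x hx.1 hxT)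

/-- Weighted Riccati comparison: with `H_f = H - φ' 0`, if `m 0 = H`,
`m' r ≤ - (m r)^2/(n-1) + φ'' r` on `[0,T)`, `H_f ≥ 0` and `φ' ≥ 0` on `[0,T)`,
then `m r - φ' r ≤ (n-1) * H_f / ((n-1) + H_f * r)` for every `r ∈ [0,T)`. -/
theorem weighted_riccati_comparison
    (n H : ℝ) (hn : 1 < n) (T : ℝ≥0∞) (hT : 0 < T)
    (m m' φ φ' φ'' : ℝ → ℝ)
    (hm : ∀ r : ℝ, 0 ≤ r → ENNReal.ofReal r < T →
      HasDerivWithinAt m (m' r) (Set.Ici 0) r)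
    (hφ : ∀ r : ℝ, 0 ≤ r → ENNReal.ofReal r < T →
      HasDerivWithinAt φ (φ' r) (Set.Ici 0) r)
    (hφ' : ∀ r : ℝ, 0 ≤ r → ENNReal.ofReal r < T →
      HasDerivWithinAt φ' (φ'' r) (Set.Ici 0) r)
    (h0 : m 0 = H)
    (hriccati : ∀ r : ℝ, 0 ≤ r → ENNReal.ofReal r < T →
      m' r ≤ - (m r) ^ 2 / (n - 1) + φ'' r)
    (hHf : 0 ≤ H - φ' 0)
    (hφ'nonneg : ∀ r : ℝ, 0 ≤ r → ENNReal.ofReal r < T → 0 ≤ φ' r)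
    (r : ℝ) (hr0 : 0 ≤ r) (hrT : ENNReal.ofReal r < T) :
    m r - φ' r ≤ (n - 1) * (H - φ' 0) / ((n - 1) + (H - φ' 0) * r) :=
  weighted_riccati_comparison_general n H hn T m m' φ' φ'' hm hφ' h0 hriccati hHf hφ'nonneg r hr0
    hrT
end

section
/- Tube-volume limsup bound (measure-theoretic core of the Willmore-type inequalities (5) and (8)): let (Σ, μ) be a measure space with μ a finite measure, let k > 1 be a real number, let c : Σ → [0,∞) be μ-integrable, let H : Σ → ℝ be measurable and bounded, and let V : Σ × [0,∞) → [0,∞) be measurable such that V(x,t) ≤ c(x) · (1 + max(H(x),0) · t/(k−1))^{k−1} for all x ∈ Σ and t ≥ 0. Then limsup_{R→∞} (k / R^k) · ∫_Σ ∫₀^R V(x,t) dt dμ(x) ≤ ∫_Σ c(x) · (max(H(x),0)/(k−1))^{k−1} dμ(x). -/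
/-!
With `b = max H 0 / (k - 1)`, the hypothesis on `V` bounds `∫₀ᴿ V x` by `c x` times the tube volume
of the model with volume element `(1 + b t) ^ (k - 1)`. After the normalisation `k R⁻ᵏ` this
model volume equals `((R⁻¹ + b) ^ k - R⁻ᵏ) / b`, which tends to `b ^ (k - 1)`; for `R ≥ 1` it is at
most `k (1 + b) ^ (k - 1)`, so boundedness of `H` lets dominated convergence pass the limit through
the integral over `Σ`.
-/

open Filter MeasureTheory intervalIntegral Topology

lemma integral_one_add_mul_rpow {b k : ℝ} (hb : b ≠ 0) (hk : 0 < k) (R : ℝ) :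
    ∫ t in (0 : ℝ)..R, (1 + b * t) ^ (k - 1) = ((1 + b * R) ^ k - 1) / (b * k) := by
  rw [integral_comp_add_mul (fun u => u ^ (k - 1)) hb, integral_rpow (Or.inl (by linarith))]
  simp only [mul_zero, add_zero, sub_add_cancel, Real.one_rpow, smul_eq_mul]
  field_simp

/-- `k R⁻ᵏ` times the volume of the radius-`R` tube in the model whose volume element is
`(1 + b t) ^ (k - 1)`. -/
noncomputable def modelTubeRatio (k b R : ℝ) : ℝ :=
  k / R ^ k * ∫ t in (0 : ℝ)..R, (1 + b * t) ^ (k - 1)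

section modelTubeRatio

variable {k b R : ℝ}

lemma continuous_modelTubeRatio_left (hk : 1 ≤ k) (R : ℝ) :
    Continuous fun b => modelTubeRatio k b R := by
  refine continuous_const.mul
    (continuous_parametric_intervalIntegral_of_continuous' ?_ 0 R)
  exact (Real.continuous_rpow_const (by linarith)).comp (by fun_prop)

lemma modelTubeRatio_nonneg (hk : 0 ≤ k) (hb : 0 ≤ b) (hR : 0 ≤ R) :
    0 ≤ modelTubeRatio k b R :=
  mul_nonneg (div_nonneg hk (Real.rpow_nonneg hR k))
    (integral_nonneg hR fun t ht => Real.rpow_nonneg (by nlinarith [ht.1]) _)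

lemma modelTubeRatio_le (hk : 1 ≤ k) (hb : 0 ≤ b) (hR : 1 ≤ R) :
    modelTubeRatio k b R ≤ k * (1 + b) ^ (k - 1) := by
  have hR0 : 0 < R := by linarith
  have hRk : R ^ k = R * R ^ (k - 1) := by
    rw [← Real.rpow_one_add' hR0.le (by linarith), add_sub_cancel]
  -- on `[0, R]` with `R ≥ 1`, the base `1 + b t` is at most `R (1 + b)`
  have hle : ∫ t in (0 : ℝ)..R, (1 + b * t) ^ (k - 1) ≤
      ∫ _ in (0 : ℝ)..R, (R * (1 + b)) ^ (k - 1) :=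
    integral_mono_on hR0.le
      (((Real.continuous_rpow_const (by linarith)).comp (by fun_prop)).intervalIntegrable _ _)
      intervalIntegrable_const fun t ht =>
        Real.rpow_le_rpow (by nlinarith [ht.1]) (by nlinarith [ht.2]) (by linarith)
  rw [intervalIntegral.integral_const, smul_eq_mul, sub_zero, Real.mul_rpow hR0.le (by linarith),
    ← mul_assoc, ← hRk] at hle
  calc modelTubeRatio k b R ≤ k / R ^ k * (R ^ k * (1 + b) ^ (k - 1)) :=
        mul_le_mul_of_nonneg_left hle (div_nonneg (by linarith) (Real.rpow_nonneg hR0.le k))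
    _ = k * (1 + b) ^ (k - 1) := by
        field_simp [(Real.rpow_pos_of_pos hR0 k).ne']

lemma tendsto_modelTubeRatio (hk : 1 < k) (hb : 0 ≤ b) :
    Tendsto (modelTubeRatio k b) atTop (𝓝 (b ^ (k - 1))) := by
  rcases hb.eq_or_lt with rfl | hb
  · have hk1 : 0 < k - 1 := by linarith
    have heq : (fun R => k * R ^ (-(k - 1))) =ᶠ[atTop] modelTubeRatio k 0 := by
      filter_upwards [eventually_gt_atTop 0] with R hR
      simp only [modelTubeRatio, zero_mul, add_zero, Real.one_rpow,
        intervalIntegral.integral_const, sub_zero, smul_eq_mul, mul_one, Real.rpow_neg hR.le]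
      rw [show R ^ k = R ^ (k - 1) * R by rw [← Real.rpow_add_one hR.ne', sub_add_cancel]]
      field_simp
    rw [Real.zero_rpow hk1.ne']
    simpa using ((tendsto_rpow_neg_atTop hk1).const_mul k).congr' heq
  · -- in the closed form, `R⁻ᵏ (1 + b R)ᵏ = (R⁻¹ + b)ᵏ`, a continuous function of `R⁻¹ → 0`
    set F : ℝ → ℝ := fun u => ((u + b) ^ k - u ^ k) / b
    have hF : ContinuousAt F 0 := by
      refine ((Real.continuousAt_rpow_const _ k (Or.inr (by linarith))).comp ?_).sub
        (Real.continuousAt_rpow_const _ k (Or.inr (by linarith))) |>.div_const b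
      fun_prop
    have heq : (fun R => F R⁻¹) =ᶠ[atTop] modelTubeRatio k b := by
      filter_upwards [eventually_gt_atTop 0] with R hR
      simp only [F]
      rw [modelTubeRatio, integral_one_add_mul_rpow hb.ne' (by linarith),
        show R⁻¹ + b = (1 + b * R) / R by field_simp, Real.div_rpow (by positivity) hR.le,
        Real.inv_rpow hR.le]
      field_simp
    have hlim : F 0 = b ^ (k - 1) := by
      simp only [F, zero_add, Real.zero_rpow (by linarith : k ≠ 0), sub_zero,
        Real.rpow_sub_one hb.ne']
    rw [← hlim]
    exact (hF.tendsto.comp tendsto_inv_atTop_zero).congr' heq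

lemma norm_mul_modelTubeRatio_le {B₀ : ℝ} (hk : 1 ≤ k) (hb : 0 ≤ b) (hbB : b ≤ B₀) (hR : 1 ≤ R)
    (a : ℝ) : ‖a * modelTubeRatio k b R‖ ≤ ‖a‖ * (k * (1 + B₀) ^ (k - 1)) := by
  rw [norm_mul, Real.norm_of_nonneg (modelTubeRatio_nonneg (by linarith) hb (by linarith))]
  gcongr
  exact (modelTubeRatio_le hk hb hR).trans (by gcongr)

lemma mul_intervalIntegral_le_mul_modelTubeRatio {f : ℝ → ℝ} {a : ℝ} (hk : 1 ≤ k)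
    (hR : 0 ≤ R) (hf0 : ∀ t, 0 ≤ t → 0 ≤ f t) (hf : ∀ t, 0 ≤ t → f t ≤ a * (1 + b * t) ^ (k - 1)) :
    k / R ^ k * ∫ t in (0 : ℝ)..R, f t ≤ a * modelTubeRatio k b R := by
  rw [modelTubeRatio, mul_left_comm]
  refine mul_le_mul_of_nonneg_left ?_
    (div_nonneg (by linarith : (0 : ℝ) ≤ k) (Real.rpow_nonneg hR k))
  rw [← intervalIntegral.integral_const_mul, integral_of_le hR, integral_of_le hR]
  refine integral_mono_of_nonneg
    (ae_restrict_of_forall_mem measurableSet_Ioc fun t ht => hf0 t ht.1.le)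
    (Continuous.integrableOn_Ioc ?_)
    (ae_restrict_of_forall_mem measurableSet_Ioc fun t ht => hf t ht.1.le)
  exact continuous_const.mul ((Real.continuous_rpow_const (by linarith)).comp (by fun_prop))

end modelTubeRatio

section integral

variable {α : Type*} [MeasurableSpace α] {μ : Measure α} {k B₀ : ℝ} {c B : α → ℝ}

lemma integrable_mul_modelTubeRatio (hk : 1 ≤ k) (hc : Integrable c μ) (hB : Measurable B)
    (hB0 : ∀ x, 0 ≤ B x) (hBle : ∀ x, B x ≤ B₀) {R : ℝ} (hR : 1 ≤ R) :
    Integrable (fun x => c x * modelTubeRatio k (B x) R) μ :=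
  (hc.norm.mul_const _).mono'
    (hc.aestronglyMeasurable.mul
      ((continuous_modelTubeRatio_left hk R).measurable.comp hB).aestronglyMeasurable)
    (.of_forall fun x => norm_mul_modelTubeRatio_le hk (hB0 x) (hBle x) hR (c x))

lemma tendsto_integral_mul_modelTubeRatio (hk : 1 < k) (hc : Integrable c μ)
    (hB : Measurable B) (hB0 : ∀ x, 0 ≤ B x) (hBle : ∀ x, B x ≤ B₀) :
    Tendsto (fun R => ∫ x, c x * modelTubeRatio k (B x) R ∂μ) atTop
      (𝓝 (∫ x, c x * B x ^ (k - 1) ∂μ)) :=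
  tendsto_integral_filter_of_dominated_convergence (fun x => ‖c x‖ * (k * (1 + B₀) ^ (k - 1)))
    ((eventually_ge_atTop 1).mono fun _ hR =>
      (integrable_mul_modelTubeRatio hk.le hc hB hB0 hBle hR).aestronglyMeasurable)
    ((eventually_ge_atTop 1).mono fun _ hR =>
      .of_forall fun x => norm_mul_modelTubeRatio_le hk.le (hB0 x) (hBle x) hR (c x))
    (hc.norm.mul_const _)
    (.of_forall fun x => (tendsto_modelTubeRatio hk (hB0 x)).const_mul (c x))

end integral

lemma limsup_le_of_eventually_le_of_tendsto {β : Type*} {l : Filter β} [l.NeBot] {f g : β → ℝ}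
    {L : ℝ} (hf : IsBoundedUnder (· ≥ ·) l f) (hfg : f ≤ᶠ[l] g) (hg : Tendsto g l (𝓝 L)) :
    limsup f l ≤ L :=
  (limsup_le_limsup hfg hf.isCoboundedUnder_le hg.isBoundedUnder_le).trans_eq hg.limsup_eq

theorem tube_volume_limsup_bound_general
    {α : Type*} [MeasurableSpace α] (μ : Measure α)
    (k : ℝ) (hk : 1 < k)
    (c : α → ℝ) (hc : Integrable c μ)
    (H : α → ℝ) (hHmeas : Measurable H) (hHbdd : ∃ C : ℝ, ∀ x, |H x| ≤ C)
    (V : α → ℝ → ℝ)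
    (hV0 : ∀ x, ∀ t : ℝ, 0 ≤ t → 0 ≤ V x t)
    (hVle : ∀ x, ∀ t : ℝ, 0 ≤ t →
      V x t ≤ c x * (1 + max (H x) 0 * t / (k - 1)) ^ (k - 1)) :
    Filter.limsup
        (fun R : ℝ => (k / R ^ k) * ∫ x, (∫ t in (0 : ℝ)..R, V x t) ∂μ)
        Filter.atTop ≤
      ∫ x, c x * (max (H x) 0 / (k - 1)) ^ (k - 1) ∂μ := by
  obtain ⟨C, hC⟩ := hHbdd
  have hk1 : 0 < k - 1 := by linarith
  let B : α → ℝ := fun x => max (H x) 0 / (k - 1)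
  have hB0 : ∀ x, 0 ≤ B x := fun x => div_nonneg (le_max_right _ _) hk1.le
  have hBle : ∀ x, B x ≤ max C 0 / (k - 1) := fun x =>
    div_le_div_of_nonneg_right (max_le_max_right 0 ((le_abs_self _).trans (hC x))) hk1.le
  have hB : Measurable B := (hHmeas.max measurable_const).div_const _
  have hVB : ∀ x t, 0 ≤ t → V x t ≤ c x * (1 + B x * t) ^ (k - 1) := fun x t ht =>
    mul_div_right_comm (max (H x) 0) t (k - 1) ▸ hVle x t ht
  have hscaled_nonneg : ∀ R, 0 ≤ R → ∀ x, 0 ≤ k / R ^ k * ∫ t in (0 : ℝ)..R, V x t :=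
    fun R hR x => mul_nonneg (div_nonneg (by linarith) (Real.rpow_nonneg hR k))
      (integral_nonneg hR fun t ht => hV0 x t ht.1)
  refine limsup_le_of_eventually_le_of_tendsto ?_ ?_
    (tendsto_integral_mul_modelTubeRatio hk hc hB hB0 hBle)
  · refine isBoundedUnder_of_eventually_ge (a := 0) ?_
    filter_upwards [eventually_ge_atTop 0] with R hR
    rw [← MeasureTheory.integral_const_mul]
    exact integral_nonneg (hscaled_nonneg R hR)
  · filter_upwards [eventually_ge_atTop 1] with R hR
    rw [← MeasureTheory.integral_const_mul]
    exact integral_mono_of_nonneg (.of_forall (hscaled_nonneg R (by linarith)))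
      (integrable_mul_modelTubeRatio hk.le hc hB hB0 hBle hR)
      (.of_forall fun x =>
        mul_intervalIntegral_le_mul_modelTubeRatio hk.le (by linarith) (hV0 x) (hVB x))

/-- Tube-volume limsup bound: if `μ` is a finite measure on `Σ`, `k > 1`,
`c : Σ → [0,∞)` is integrable, `H` is measurable and bounded, and
`V : Σ × [0,∞) → [0,∞)` is measurable with
`V x t ≤ c x * (1 + max (H x) 0 * t/(k-1))^(k-1)` for all `x` and `t ≥ 0`, then
`limsup_{R→∞} (k / R^k) * ∫_Σ ∫₀^R V x t dt dμ(x)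
  ≤ ∫_Σ c x * (max (H x) 0/(k-1))^(k-1) dμ(x)`. -/
theorem tube_volume_limsup_bound
    {α : Type*} [MeasurableSpace α] (μ : Measure α) [IsFiniteMeasure μ]
    (k : ℝ) (hk : 1 < k)
    (c : α → ℝ) (hc0 : ∀ x, 0 ≤ c x) (hc : Integrable c μ)
    (H : α → ℝ) (hHmeas : Measurable H) (hHbdd : ∃ C : ℝ, ∀ x, |H x| ≤ C)
    (V : α → ℝ → ℝ) (hVmeas : Measurable (Function.uncurry V))
    (hV0 : ∀ x, ∀ t : ℝ, 0 ≤ t → 0 ≤ V x t)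
    (hVle : ∀ x, ∀ t : ℝ, 0 ≤ t →
      V x t ≤ c x * (1 + max (H x) 0 * t / (k - 1)) ^ (k - 1)) :
    Filter.limsup
        (fun R : ℝ => (k / R ^ k) * ∫ x, (∫ t in (0 : ℝ)..R, V x t) ∂μ)
        Filter.atTop ≤
      ∫ x, c x * (max (H x) 0 / (k - 1)) ^ (k - 1) ∂μ :=
  tube_volume_limsup_bound_general μ k hk c hc H hHmeas hHbdd V hV0 hVle
end
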